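/- Let k ≥ 2 and n ≥ 2k+3. Then V(n,k) is the disjoint union of V(n−1,k) and the image of V(n−2,k−1) under g_n, where g_n(Y) = (Y+1) ∪ {1} if n−2 ∈ Y and (Y+1) ∪ {n} otherwise; consequently |V(n,k)| = |V(n−1,k)| + |V(n−2,k−1)|. -/
import Mathlib


open Finset

/-- The set of `k`-subsets of `[n] = {1,...,n}` that are independent in the cycle `C_n`,
i.e. contain no two cyclically consecutive elements (the cyclic successor of `i ∈ [n]`
is `i % n + 1`). -/
def SchV (n k : ℕ) : Finset (Finset ℕ) :=
  (Finset.Icc 1 n).powerset.filter (fun A => A.card = k ∧ ∀ i ∈ A, i % n + 1 ∉ A)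

/-- The core of a set: remove `1` if present, otherwise remove the maximum element. -/
def core (A : Finset ℕ) : Finset ℕ :=
  if 1 ∈ A then A.erase 1 else A.erase (A.sup id)

/-- The set `Λ_{n,i}`: `{2,4,…,i−1} ∪ {n−i+1,n−i+3,…,n}` for odd `i`,
and `{1,3,…,i−1} ∪ {n−i+1,n−i+3,…,n−1}` for even `i`. -/
def Lam (n i : ℕ) : Finset ℕ :=
  if i % 2 = 1 then
    ((Finset.range ((i - 1) / 2)).image (fun t => 2 + 2 * t)) ∪
      ((Finset.range ((i + 1) / 2)).image (fun t => n - i + 1 + 2 * t))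
  else
    ((Finset.range (i / 2)).image (fun t => 1 + 2 * t)) ∪
      ((Finset.range (i / 2)).image (fun t => n - i + 1 + 2 * t))

/-- The `n`-level of `A`: the maximum `i` (with `0 ≤ i ≤ n/2`) such that `Λ_{n,i} ⊆ A`. -/
def level (n : ℕ) (A : Finset ℕ) : ℕ :=
  ((Finset.range (n / 2 + 1)).filter (fun i => Lam n i ⊆ A)).sup id

/-- The `n`-clone of `B`: `core(B) ∪ {n}`. -/
def cloneN (n : ℕ) (B : Finset ℕ) : Finset ℕ := insert n (core B)

/-- The map `f(X) = core(X) − 1` (subtract one from each element of the core). -/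
def fCore (X : Finset ℕ) : Finset ℕ := (core X).image (fun a => a - 1)

/-- The map `g_n(Y) = (Y+1) ∪ {1}` if `n−2 ∈ Y`, and `(Y+1) ∪ {n}` otherwise. -/
def gMap (n : ℕ) (Y : Finset ℕ) : Finset ℕ :=
  if n - 2 ∈ Y then insert 1 (Y.image (· + 1)) else insert n (Y.image (· + 1))

section Aux

/-- Clean membership characterization for `SchV`, valid when `1 ≤ n`. -/
lemma mem_SchV' {n k : ℕ} (hn : 1 ≤ n) {A : Finset ℕ} :
    A ∈ SchV n k ↔ A ⊆ Finset.Icc 1 n ∧ A.card = k ∧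
      (∀ i ∈ A, i ≠ n → i + 1 ∉ A) ∧ (n ∈ A → 1 ∉ A) := by
  rw [SchV, Finset.mem_filter, Finset.mem_powerset]
  constructor
  · rintro ⟨hsub, hcard, hind⟩
    refine ⟨hsub, hcard, fun i hi hne => ?_, fun hnA => ?_⟩
    · have hi' := hsub hi; rw [Finset.mem_Icc] at hi'
      have hm : i % n = i := Nat.mod_eq_of_lt (by omega)
      have := hind i hi; rwa [hm] at this
    · have := hind n hnA; rwa [Nat.mod_self] at this
  · rintro ⟨hsub, hcard, h1, h2⟩
    refine ⟨hsub, hcard, fun i hi => ?_⟩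
    have hi' := hsub hi; rw [Finset.mem_Icc] at hi'
    by_cases he : i = n
    · subst he; rw [Nat.mod_self]; simpa using h2 hi
    · have hm : i % n = i := Nat.mod_eq_of_lt (by omega)
      rw [hm]; exact h1 i hi he

/-- `V(n−1,k)` is exactly the part of `V(n,k)` of `n`-level 0. -/
lemma mem_SchV_pred {n k : ℕ} (hn : 7 ≤ n) {A : Finset ℕ} :
    A ∈ SchV (n - 1) k ↔ A ∈ SchV n k ∧ n ∉ A ∧ ¬(1 ∈ A ∧ n - 1 ∈ A) := by
  rw [mem_SchV' (by omega), mem_SchV' (by omega)]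
  constructor
  · rintro ⟨hsub, hcard, h1, h2⟩
    have hbd : ∀ i ∈ A, 1 ≤ i ∧ i ≤ n - 1 := by
      intro i hi; have := hsub hi; rw [Finset.mem_Icc] at this; omega
    have hnA : n ∉ A := fun h => by have := hbd n h; omega
    refine ⟨⟨fun i hi => ?_, hcard, fun i hi hne => ?_, fun h => absurd h hnA⟩,
      hnA, fun ⟨ha, hb⟩ => h2 hb ha⟩
    · have := hbd i hi; rw [Finset.mem_Icc]; omega
    · by_cases he : i = n - 1
      · subst he; intro hc; have := hbd (n - 1 + 1) hc; omega
      · exact h1 i hi he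
  · rintro ⟨⟨hsub, hcard, h1, h2⟩, hnA, hno⟩
    have hbd : ∀ i ∈ A, 1 ≤ i ∧ i ≤ n - 1 := by
      intro i hi; have := hsub hi; rw [Finset.mem_Icc] at this
      have : i ≠ n := fun he => hnA (he ▸ hi); omega
    refine ⟨fun i hi => ?_, hcard, fun i hi hne => ?_, fun h h1' => hno ⟨h1', h⟩⟩
    · have := hbd i hi; rw [Finset.mem_Icc]; omega
    · have := hbd i hi
      exact h1 i hi (by omega)

lemma image_succ_mem {Y : Finset ℕ} {c : ℕ} :
    c ∈ Y.image (· + 1) ↔ ∃ y ∈ Y, y + 1 = c := by simp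

/-- `g_n` maps `V(n−2,k−1)` into `V(n,k)`. -/
lemma gMap_mem {n k : ℕ} (hk : 2 ≤ k) (hn : 2 * k + 3 ≤ n) {Y : Finset ℕ}
    (hY : Y ∈ SchV (n - 2) (k - 1)) : gMap n Y ∈ SchV n k := by
  have hn7 : 7 ≤ n := by omega
  rw [mem_SchV' (by omega)] at hY
  obtain ⟨hsub, hcard, h1, h2⟩ := hY
  have hbd : ∀ y ∈ Y, 1 ≤ y ∧ y ≤ n - 2 := by
    intro y hy; have := hsub hy; rw [Finset.mem_Icc] at this; omega
  have himcard : (Y.image (· + 1)).card = k - 1 := by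
    rw [Finset.card_image_of_injective _ (add_left_injective 1), hcard]
  have hkey : ∀ y ∈ Y, y + 1 + 1 ∉ Y.image (· + 1) := by
    intro y hy hc
    rw [image_succ_mem] at hc
    obtain ⟨y', hy', he⟩ := hc
    have hy'' : y' = y + 1 := by omega
    subst hy''
    have := hbd (y + 1) hy'
    exact h1 y hy (by omega) hy'
  rw [mem_SchV' (by omega), gMap]
  by_cases hc : n - 2 ∈ Y
  · have h1Y : 1 ∉ Y := h2 hc
    rw [if_pos hc]
    have h1im : 1 ∉ Y.image (· + 1) := by
      rw [image_succ_mem]; rintro ⟨y, hy, he⟩; have := hbd y hy; omega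
    refine ⟨?_, ?_, ?_, ?_⟩
    · intro c hcmem
      rw [Finset.mem_insert, image_succ_mem] at hcmem
      rw [Finset.mem_Icc]
      rcases hcmem with rfl | ⟨y, hy, rfl⟩
      · omega
      · have := hbd y hy; omega
    · rw [Finset.card_insert_of_notMem h1im, himcard]; omega
    · intro i hi hne
      rw [Finset.mem_insert, image_succ_mem] at hi
      rcases hi with rfl | ⟨y, hy, rfl⟩
      · intro hc2
        rw [Finset.mem_insert, image_succ_mem] at hc2
        rcases hc2 with h | ⟨y, hy, he⟩
        · omega
        · have hy1 : y = 1 := by omega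
          exact h1Y (hy1 ▸ hy)
      · intro hc2
        rw [Finset.mem_insert, image_succ_mem] at hc2
        rcases hc2 with h | ⟨y', hy', he⟩
        · omega
        · exact hkey y hy (image_succ_mem.mpr ⟨y', hy', he⟩)
    · intro hnin
      rw [Finset.mem_insert, image_succ_mem] at hnin
      rcases hnin with h | ⟨y, hy, he⟩
      · omega
      · have := hbd y hy; omega
  · rw [if_neg hc]
    have hbd' : ∀ y ∈ Y, 1 ≤ y ∧ y ≤ n - 3 := by
      intro y hy; have := hbd y hy
      have : y ≠ n - 2 := fun he => hc (he ▸ hy); omega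
    have hnim : n ∉ Y.image (· + 1) := by
      rw [image_succ_mem]; rintro ⟨y, hy, he⟩; have := hbd' y hy; omega
    refine ⟨?_, ?_, ?_, ?_⟩
    · intro c hcmem
      rw [Finset.mem_insert, image_succ_mem] at hcmem
      rw [Finset.mem_Icc]
      rcases hcmem with rfl | ⟨y, hy, rfl⟩
      · omega
      · have := hbd y hy; omega
    · rw [Finset.card_insert_of_notMem hnim, himcard]; omega
    · intro i hi hne
      rw [Finset.mem_insert, image_succ_mem] at hi
      rcases hi with rfl | ⟨y, hy, rfl⟩
      · exact absurd rfl hne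
      · intro hc2
        rw [Finset.mem_insert, image_succ_mem] at hc2
        rcases hc2 with h | ⟨y', hy', he⟩
        · have := hbd' y hy; omega
        · exact hkey y hy (image_succ_mem.mpr ⟨y', hy', he⟩)
    · intro _ h1in
      rw [Finset.mem_insert, image_succ_mem] at h1in
      rcases h1in with h | ⟨y, hy, he⟩
      · omega
      · have := hbd y hy; omega

/-- Sets in the image of `g_n` contain `n`, or contain both `1` and `n−1`. -/
lemma gMap_marker {n k : ℕ} (hn : 7 ≤ n) {Y : Finset ℕ}
    (hY : Y ∈ SchV (n - 2) (k - 1)) :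
    n ∈ gMap n Y ∨ (1 ∈ gMap n Y ∧ n - 1 ∈ gMap n Y) := by
  rw [mem_SchV' (by omega)] at hY
  rw [gMap]
  by_cases hc : n - 2 ∈ Y
  · rw [if_pos hc]
    refine Or.inr ⟨Finset.mem_insert_self _ _, ?_⟩
    exact Finset.mem_insert_of_mem (image_succ_mem.mpr ⟨n - 2, hc, by omega⟩)
  · rw [if_neg hc]; exact Or.inl (Finset.mem_insert_self _ _)

/-- `n ∈ g_n(Y)` iff `n − 2 ∉ Y` (for `Y ∈ V(n−2,k−1)`). -/
lemma gMap_n_mem {n k : ℕ} (hn : 7 ≤ n) {Y : Finset ℕ}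
    (hY : Y ∈ SchV (n - 2) (k - 1)) : n ∈ gMap n Y ↔ n - 2 ∉ Y := by
  rw [mem_SchV' (by omega)] at hY
  obtain ⟨hsub, -, -, -⟩ := hY
  have hbd : ∀ y ∈ Y, 1 ≤ y ∧ y ≤ n - 2 := by
    intro y hy; have := hsub hy; rw [Finset.mem_Icc] at this; omega
  rw [gMap]
  by_cases hc : n - 2 ∈ Y
  · rw [if_pos hc]
    simp only [Finset.mem_insert, image_succ_mem]
    constructor
    · rintro (h | ⟨y, hy, he⟩)
      · omega
      · have := hbd y hy; omega
    · intro h; exact absurd hc h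
  · rw [if_neg hc]; simp [hc]

/-- `g_n` is injective on `V(n−2,k−1)`. -/
lemma gMap_injOn {n k : ℕ} (hn : 7 ≤ n) {Y₁ Y₂ : Finset ℕ}
    (h₁ : Y₁ ∈ SchV (n - 2) (k - 1)) (h₂ : Y₂ ∈ SchV (n - 2) (k - 1))
    (heq : gMap n Y₁ = gMap n Y₂) : Y₁ = Y₂ := by
  have hbd : ∀ Y : Finset ℕ, Y ∈ SchV (n - 2) (k - 1) → ∀ y ∈ Y, 1 ≤ y ∧ y ≤ n - 2 := by
    intro Y hY y hy
    rw [mem_SchV' (by omega)] at hY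
    have := hY.1 hy; rw [Finset.mem_Icc] at this; omega
  have h1im : ∀ Y : Finset ℕ, Y ∈ SchV (n - 2) (k - 1) → 1 ∉ Y.image (· + 1) := by
    intro Y hY h
    rw [image_succ_mem] at h; obtain ⟨y, hy, he⟩ := h
    have := hbd Y hY y hy; omega
  have hnim : ∀ Y : Finset ℕ, Y ∈ SchV (n - 2) (k - 1) → n ∉ Y.image (· + 1) := by
    intro Y hY h
    rw [image_succ_mem] at h; obtain ⟨y, hy, he⟩ := h
    have := hbd Y hY y hy; omega
  have hinj : Function.Injective (fun y : ℕ => y + 1) := add_left_injective 1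
  have hcase : (n - 2 ∈ Y₁) ↔ (n - 2 ∈ Y₂) := by
    have e1 := gMap_n_mem hn h₁
    have e2 := gMap_n_mem hn h₂
    rw [heq] at e1
    rw [e2] at e1
    tauto
  rw [gMap, gMap] at heq
  by_cases hc : n - 2 ∈ Y₁
  · have hc2 : n - 2 ∈ Y₂ := hcase.mp hc
    rw [if_pos hc, if_pos hc2] at heq
    have : Y₁.image (· + 1) = Y₂.image (· + 1) := by
      have := congrArg (fun s => Finset.erase s 1) heq
      simpa [Finset.erase_insert (h1im Y₁ h₁), Finset.erase_insert (h1im Y₂ h₂)] using this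
    exact Finset.image_injective hinj this
  · have hc2 : n - 2 ∉ Y₂ := fun h => hc (hcase.mpr h)
    rw [if_neg hc, if_neg hc2] at heq
    have : Y₁.image (· + 1) = Y₂.image (· + 1) := by
      have := congrArg (fun s => Finset.erase s n) heq
      simpa [Finset.erase_insert (hnim Y₁ h₁), Finset.erase_insert (hnim Y₂ h₂)] using this
    exact Finset.image_injective hinj this

/-- Every `A ∈ V(n,k)` of `n`-level ≥ 1 is in the image of `g_n`. -/
lemma exists_gMap_preimage {n k : ℕ} (hk : 2 ≤ k) (hn : 2 * k + 3 ≤ n) {A : Finset ℕ}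
    (hA : A ∈ SchV n k) (hmark : n ∈ A ∨ (1 ∈ A ∧ n - 1 ∈ A)) :
    ∃ Y ∈ SchV (n - 2) (k - 1), gMap n Y = A := by
  have hn7 : 7 ≤ n := by omega
  rw [mem_SchV' (by omega)] at hA
  obtain ⟨hsub, hcard, h1, h2⟩ := hA
  have hbd : ∀ i ∈ A, 1 ≤ i ∧ i ≤ n := by
    intro i hi; have := hsub hi; rw [Finset.mem_Icc] at this; omega
  by_cases hnA : n ∈ A
  · -- A contains n: Y = (A \ {n}) − 1, and g_n adds back n.
    have h1A : 1 ∉ A := h2 hnA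
    have hn1A : n - 1 ∉ A := fun h => h1 (n - 1) h (by omega) (by
      have : n - 1 + 1 = n := by omega
      rw [this]; exact hnA)
    set Y : Finset ℕ := (A.erase n).image (fun b => b - 1) with hYdef
    have hmem : ∀ a : ℕ, a ∈ Y ↔ a + 1 ∈ A ∧ a + 1 ≠ n := by
      intro a
      simp only [hYdef, Finset.mem_image, Finset.mem_erase]
      constructor
      · rintro ⟨b, ⟨hbn, hbA⟩, he⟩
        have hb1 : b ≠ 1 := fun h => h1A (h ▸ hbA)
        have := hbd b hbA
        have : b = a + 1 := by omega
        subst this; exact ⟨hbA, by omega⟩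
      · rintro ⟨h, hne⟩
        exact ⟨a + 1, ⟨hne, h⟩, by omega⟩
    have hn2Y : n - 2 ∉ Y := by
      rw [hmem]; rintro ⟨h, -⟩
      have : n - 2 + 1 = n - 1 := by omega
      exact hn1A (this ▸ h)
    refine ⟨Y, ?_, ?_⟩
    · rw [mem_SchV' (by omega)]
      refine ⟨?_, ?_, ?_, ?_⟩
      · intro a ha
        rw [hmem] at ha
        obtain ⟨hA1, hne⟩ := ha
        have := hbd (a + 1) hA1
        have ha1 : a + 1 ≠ 1 := fun h => h1A (h ▸ hA1)
        have ha2 : a + 1 ≠ n - 1 := fun h => hn1A (h ▸ hA1)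
        rw [Finset.mem_Icc]; omega
      · rw [hYdef, Finset.card_image_of_injOn, Finset.card_erase_of_mem hnA, hcard]
        intro b hb b' hb' he
        rw [Finset.coe_erase, Set.mem_diff] at hb hb'
        have hb1 : b ≠ 1 := fun h => h1A (h ▸ hb.1)
        have hb1' : b' ≠ 1 := fun h => h1A (h ▸ hb'.1)
        have := hbd b hb.1; have := hbd b' hb'.1
        simp only at he; omega
      · intro i hi hne hi1
        rw [hmem] at hi hi1
        obtain ⟨hiA, hin⟩ := hi
        obtain ⟨hi1A, hi1n⟩ := hi1
        exact h1 (i + 1) hiA hin (by simpa using hi1A)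
      · intro h; exact absurd h hn2Y
    · rw [gMap, if_neg hn2Y]
      ext c
      simp only [Finset.mem_insert, image_succ_mem]
      constructor
      · rintro (rfl | ⟨a, ha, rfl⟩)
        · exact hnA
        · exact ((hmem a).mp ha).1
      · intro hc
        by_cases he : c = n
        · exact Or.inl he
        · refine Or.inr ⟨c - 1, ?_, ?_⟩
          · rw [hmem]
            have := hbd c hc
            have : c - 1 + 1 = c := by omega
            rw [this]; exact ⟨hc, he⟩
          · have := hbd c hc; omega
  · -- A contains 1 and n−1: Y = (A \ {1}) − 1, and g_n adds back 1.
    rcases hmark with h | ⟨h1A, hn1A⟩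
    · exact absurd h hnA
    have h2A : 2 ∉ A := h1 1 h1A (by omega)
    set Y : Finset ℕ := (A.erase 1).image (fun b => b - 1) with hYdef
    have hmem : ∀ a : ℕ, a ∈ Y ↔ a + 1 ∈ A ∧ 1 ≤ a := by
      intro a
      simp only [hYdef, Finset.mem_image, Finset.mem_erase]
      constructor
      · rintro ⟨b, ⟨hb1, hbA⟩, he⟩
        have := hbd b hbA
        have : b = a + 1 := by omega
        subst this; exact ⟨hbA, by omega⟩
      · rintro ⟨h, hge⟩
        exact ⟨a + 1, ⟨by omega, h⟩, by omega⟩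
    have hn2Y : n - 2 ∈ Y := by
      rw [hmem]
      have : n - 2 + 1 = n - 1 := by omega
      rw [this]; exact ⟨hn1A, by omega⟩
    refine ⟨Y, ?_, ?_⟩
    · rw [mem_SchV' (by omega)]
      refine ⟨?_, ?_, ?_, ?_⟩
      · intro a ha
        rw [hmem] at ha
        obtain ⟨hA1, hge⟩ := ha
        have := hbd (a + 1) hA1
        have ha1 : a + 1 ≠ n := fun h => hnA (h ▸ hA1)
        rw [Finset.mem_Icc]; omega
      · rw [hYdef, Finset.card_image_of_injOn, Finset.card_erase_of_mem h1A, hcard]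
        intro b hb b' hb' he
        rw [Finset.coe_erase, Set.mem_diff] at hb hb'
        have hb1 : b ≠ 1 := by simpa using hb.2
        have hb1' : b' ≠ 1 := by simpa using hb'.2
        have := hbd b hb.1; have := hbd b' hb'.1
        simp only at he; omega
      · intro i hi hne hi1
        rw [hmem] at hi hi1
        obtain ⟨hiA, -⟩ := hi
        obtain ⟨hi1A, -⟩ := hi1
        have hin : i + 1 ≠ n := fun h => hnA (h ▸ hiA)
        exact h1 (i + 1) hiA hin (by simpa using hi1A)
      · intro _ h1Y
        rw [hmem] at h1Y
        exact h2A (by simpa using h1Y.1)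
    · rw [gMap, if_pos hn2Y]
      ext c
      simp only [Finset.mem_insert, image_succ_mem]
      constructor
      · rintro (rfl | ⟨a, ha, rfl⟩)
        · exact h1A
        · exact ((hmem a).mp ha).1
      · intro hc
        by_cases he : c = 1
        · exact Or.inl he
        · refine Or.inr ⟨c - 1, ?_, ?_⟩
          · rw [hmem]
            have := hbd c hc
            have hcc : c - 1 + 1 = c := by omega
            rw [hcc]; exact ⟨hc, by omega⟩
          · have := hbd c hc; omega

end Aux

/-- For `k ≥ 2` and `n ≥ 2k+3`, `V(n,k)` is the disjoint union of
`V(n−1,k)` and the image of `V(n−2,k−1)` under `g_n`; consequently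
`|V(n,k)| = |V(n−1,k)| + |V(n−2,k−1)|`. -/
theorem SchV_decomposition (k n : ℕ) (hk : 2 ≤ k) (hn : 2 * k + 3 ≤ n) :
    SchV n k = SchV (n - 1) k ∪ (SchV (n - 2) (k - 1)).image (gMap n) ∧
    Disjoint (SchV (n - 1) k) ((SchV (n - 2) (k - 1)).image (gMap n)) ∧
    (SchV n k).card = (SchV (n - 1) k).card + (SchV (n - 2) (k - 1)).card := by
  have hn7 : 7 ≤ n := by omega
  have hunion : SchV n k = SchV (n - 1) k ∪ (SchV (n - 2) (k - 1)).image (gMap n) := by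
    ext A
    constructor
    · intro hA
      by_cases hm : n ∈ A ∨ (1 ∈ A ∧ n - 1 ∈ A)
      · obtain ⟨Y, hY, hYe⟩ := exists_gMap_preimage hk hn hA hm
        exact Finset.mem_union_right _ (Finset.mem_image.mpr ⟨Y, hY, hYe⟩)
      · push_neg at hm
        refine Finset.mem_union_left _ ((mem_SchV_pred hn7).mpr ⟨hA, hm.1, ?_⟩)
        rintro ⟨h1, h2⟩; exact hm.2 h1 h2
    · intro hA
      rcases Finset.mem_union.mp hA with h | h
      · exact ((mem_SchV_pred hn7).mp h).1
      · obtain ⟨Y, hY, rfl⟩ := Finset.mem_image.mp h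
        exact gMap_mem hk hn hY
  have hdisj : Disjoint (SchV (n - 1) k) ((SchV (n - 2) (k - 1)).image (gMap n)) := by
    rw [Finset.disjoint_left]
    intro A hA hA'
    obtain ⟨-, hnA, hno⟩ := (mem_SchV_pred hn7).mp hA
    obtain ⟨Y, hY, rfl⟩ := Finset.mem_image.mp hA'
    rcases gMap_marker hn7 hY with h | h
    · exact hnA h
    · exact hno h
  refine ⟨hunion, hdisj, ?_⟩
  rw [hunion, Finset.card_union_of_disjoint hdisj,
    Finset.card_image_of_injOn (fun Y₁ h₁ Y₂ h₂ he => gMap_injOn hn7 h₁ h₂ he)]
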